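/- Let B be an sp-bisimulation between nets N₁ and N₂, and B′ an sp-bisimulation between N₂ and N₃. For linkings h ∈ ℕ^{S₁×S₃}, k ∈ ℕ^{S₁×S₂}, l ∈ ℕ^{S₂×S₃}, write h ∈ k;l if there is a multiset m ∈ ℕ^{S₁×S₂×S₃} with k(s₁,s₂) = Σ_{s₃} m(s₁,s₂,s₃), l(s₂,s₃) = Σ_{s₁} m(s₁,s₂,s₃), and h(s₁,s₃) = Σ_{s₂} m(s₁,s₂,s₃). Then B;B′ := {h | h ∈ k;l for some k ∈ B and l ∈ B′} is an sp-bisimulation between N₁ and N₃; consequently ≈sp is transitive. -/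

import Mathlib

open scoped Classical

/-- A typed Petri net over the action alphabet `Act`.  The flow relation (with arc
weights) is presented through the pre- and post-multisets of each transition. -/
structure PetriNet (Act : Type) : Type 1 where
  Plc : Type
  Tr : Type
  pre : Tr → Multiset Plc
  post : Tr → Multiset Plc
  M0 : Multiset Plc
  typ : Set Act
  lbl : Tr → Act
  lbl_mem : ∀ t, lbl t ∈ typ

namespace PetriNet

variable {Act : Type}

/-- `M [t⟩ M'`: transition `t` is enabled at the marking `M` and firing it yields `M'`. -/
def fires (N : PetriNet Act) (M : Multiset N.Plc) (t : N.Tr) (M' : Multiset N.Plc) : Prop :=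
  N.pre t ≤ M ∧ M' = M - N.pre t + N.post t

/-- The markings reachable from the initial marking (i.e. occurring in some path). -/
inductive Reachable (N : PetriNet Act) : Multiset N.Plc → Prop
  | init : Reachable N N.M0
  | step {M : Multiset N.Plc} {t : N.Tr} {M' : Multiset N.Plc} :
      Reachable N M → N.fires M t M' → Reachable N M'

/-- Bounded parallelism: no reachable marking `M` admits an infinite multiset `U` of
transitions with `∑_{t ∈ U} •t ≤ M`. -/
def BoundedParallelism (N : PetriNet Act) : Prop :=
  ¬ ∃ (M : Multiset N.Plc) (U : N.Tr → ℕ), N.Reachable M ∧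
      (Function.support U).Infinite ∧
      ∀ F : Finset N.Tr, (∑ t ∈ F, U t • N.pre t) ≤ M

/-- A net is safe if every reachable marking is a plain set. -/
def Safe (N : PetriNet Act) : Prop := ∀ M, N.Reachable M → M.Nodup

end PetriNet

/-- A linking between two nets: a multiset of links, i.e. of pairs of places. -/
abbrev Linking {Act : Type} (N₁ N₂ : PetriNet Act) : Type := Multiset (N₁.Plc × N₂.Plc)

/-- First projection of a linking: the induced marking of the first net. -/
def Linking.proj1 {Act : Type} {N₁ N₂ : PetriNet Act} (l : Linking N₁ N₂) :
    Multiset N₁.Plc := l.map Prod.fst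

/-- Second projection of a linking: the induced marking of the second net. -/
def Linking.proj2 {Act : Type} {N₁ N₂ : PetriNet Act} (l : Linking N₁ N₂) :
    Multiset N₂.Plc := l.map Prod.snd

/-- `B` is a structure preserving bisimulation between `N₁` and `N₂`. -/
def IsSPBisim {Act : Type} (N₁ N₂ : PetriNet Act) (B : Set (Linking N₁ N₂)) : Prop :=
  (∀ c l : Linking N₁ N₂, l ∈ B → c ≤ l → ∀ t₁ : N₁.Tr, c.proj1 = N₁.pre t₁ →
      ∃ t₂ : N₂.Tr, N₂.lbl t₂ = N₁.lbl t₁ ∧ c.proj2 = N₂.pre t₂ ∧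
        ∃ cbar : Linking N₁ N₂, cbar.proj1 = N₁.post t₁ ∧ cbar.proj2 = N₂.post t₂ ∧
          l - c + cbar ∈ B) ∧
  (∀ c l : Linking N₁ N₂, l ∈ B → c ≤ l → ∀ t₂ : N₂.Tr, c.proj2 = N₂.pre t₂ →
      ∃ t₁ : N₁.Tr, N₁.lbl t₁ = N₂.lbl t₂ ∧ c.proj1 = N₁.pre t₁ ∧
        ∃ cbar : Linking N₁ N₂, cbar.proj1 = N₁.post t₁ ∧ cbar.proj2 = N₂.post t₂ ∧
          l - c + cbar ∈ B)

/-- Structure preserving bisimilarity `N₁ ≈sp N₂`. -/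
def SPBisimilar {Act : Type} (N₁ N₂ : PetriNet Act) : Prop :=
  N₁.typ = N₂.typ ∧ ∃ B : Set (Linking N₁ N₂), IsSPBisim N₁ N₂ B ∧
    ∃ l ∈ B, l.proj1 = N₁.M0 ∧ l.proj2 = N₂.M0

/-- `h ∈ k;l`: the linking `h` is a relational composition of `k` and `l`, witnessed by
a multiset `m` of triples of places projecting to `k`, `l` and `h` respectively. -/
def LinkingComp {Act : Type} {N₁ N₂ N₃ : PetriNet Act}
    (k : Linking N₁ N₂) (l : Linking N₂ N₃) (h : Linking N₁ N₃) : Prop :=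
  ∃ m : Multiset (N₁.Plc × N₂.Plc × N₃.Plc),
    k = m.map (fun x => (x.1, x.2.1)) ∧
    l = m.map (fun x => (x.2.1, x.2.2)) ∧
    h = m.map (fun x => (x.1, x.2.2))

/-
A sub-linking `c` of a composite `h ∈ k;l` lifts through the witnessing multiset of triples to
sub-linkings `a ≤ k`, `b ≤ l` with `c ∈ a;b`, while the rest of `h` stays a composite of the rest
of `k` and `l`. A transition of `N₁` consuming `c` is answered by `B` through `a`, the answering
transition of `N₂` is answered by `B'` through `b`, and the two post-linkings agree on the
post-set of the middle transition, so they glue to a post-linking between `N₁` and `N₃`.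
The clause for transitions of `N₃` is the same argument for the reversed linkings.
-/

theorem Multiset.exists_le_map_eq_of_le_map {α β : Type*} {f : α → β} {s : Multiset α}
    {c : Multiset β} (h : c ≤ s.map f) : ∃ d ≤ s, d.map f = c := by
  induction s using Multiset.induction generalizing c with
  | empty => exact ⟨0, le_rfl, by simpa [eq_comm] using h⟩
  | cons a s ih =>
    rw [Multiset.map_cons] at h
    by_cases hfa : f a ∈ c
    · obtain ⟨c', rfl⟩ := Multiset.exists_cons_of_mem hfa
      obtain ⟨d, hd, rfl⟩ := ih ((Multiset.cons_le_cons_iff (f a)).mp h)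
      exact ⟨a ::ₘ d, Multiset.cons_le_cons a hd, Multiset.map_cons f a d⟩
    · obtain ⟨d, hd, hdc⟩ := ih ((Multiset.le_cons_of_notMem hfa).mp h)
      exact ⟨d, hd.trans (Multiset.le_cons_self s a), hdc⟩

theorem Multiset.exists_map_eq_of_map_snd_eq_map_fst {α β γ : Type*} (u : Multiset (α × β))
    (v : Multiset (β × γ)) (h : u.map Prod.snd = v.map Prod.fst) :
    ∃ w : Multiset (α × β × γ), w.map (fun x => (x.1, x.2.1)) = u ∧
      w.map (fun x => (x.2.1, x.2.2)) = v := by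
  induction u using Multiset.induction generalizing v with
  | empty =>
    obtain rfl : v = 0 := by simpa using h.symm
    exact ⟨0, rfl, rfl⟩
  | cons p u ih =>
    obtain ⟨a, b'⟩ := p
    obtain ⟨⟨b, c⟩, hq, rfl⟩ :=
      Multiset.mem_map.mp (h ▸ Multiset.mem_map_of_mem Prod.snd (Multiset.mem_cons_self _ u))
    obtain ⟨v, rfl⟩ := Multiset.exists_cons_of_mem hq
    obtain ⟨w, rfl, rfl⟩ := ih v (by simpa using h)
    exact ⟨(a, b, c) ::ₘ w, by simp, by simp⟩

theorem Multiset.map_tsub_of_le {α β : Type*} [DecidableEq α] [DecidableEq β] (f : α → β)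
    {s d : Multiset α} (h : d ≤ s) : (s - d).map f = s.map f - d.map f :=
  (_root_.map_tsub_of_le (Multiset.mapAddMonoidHom f) s d h).symm

section

variable {Act : Type} {N₁ N₂ N₃ : PetriNet Act}

namespace Linking

def swap (l : Linking N₁ N₂) : Linking N₂ N₁ := l.map Prod.swap

@[simp]
theorem swap_swap (l : Linking N₁ N₂) : l.swap.swap = l := by
  simp [swap, Multiset.map_map]

@[simp]
theorem proj1_swap (l : Linking N₁ N₂) : l.swap.proj1 = l.proj2 := by
  simp [swap, proj1, proj2, Multiset.map_map]

@[simp]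
theorem proj2_swap (l : Linking N₁ N₂) : l.swap.proj2 = l.proj1 := by
  simp [swap, proj1, proj2, Multiset.map_map]

@[simp]
theorem swap_le_swap {c l : Linking N₁ N₂} : c.swap ≤ l.swap ↔ c ≤ l :=
  Multiset.map_le_map_iff Prod.swap_injective

@[simp]
theorem swap_add (k l : Linking N₁ N₂) : (k + l).swap = k.swap + l.swap :=
  Multiset.map_add _ _ _

theorem swap_tsub {c l : Linking N₁ N₂} (h : c ≤ l) : (l - c).swap = l.swap - c.swap :=
  Multiset.map_tsub_of_le _ h

end Linking

namespace LinkingComp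

variable {k : Linking N₁ N₂} {l : Linking N₂ N₃} {h : Linking N₁ N₃}

theorem proj1_eq (hc : LinkingComp k l h) : h.proj1 = k.proj1 := by
  obtain ⟨m, rfl, rfl, rfl⟩ := hc
  simp [Linking.proj1, Multiset.map_map]

theorem proj2_eq (hc : LinkingComp k l h) : h.proj2 = l.proj2 := by
  obtain ⟨m, rfl, rfl, rfl⟩ := hc
  simp [Linking.proj2, Multiset.map_map]

theorem proj2_eq_proj1 (hc : LinkingComp k l h) : k.proj2 = l.proj1 := by
  obtain ⟨m, rfl, rfl, rfl⟩ := hc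
  simp [Linking.proj1, Linking.proj2, Multiset.map_map]

theorem exists_of_proj2_eq_proj1 (hkl : k.proj2 = l.proj1) : ∃ h, LinkingComp k l h := by
  obtain ⟨m, hk, hl⟩ := Multiset.exists_map_eq_of_map_snd_eq_map_fst k l hkl
  exact ⟨_, m, hk.symm, hl.symm, rfl⟩

theorem add {k' : Linking N₁ N₂} {l' : Linking N₂ N₃} {h' : Linking N₁ N₃}
    (hc : LinkingComp k l h) (hc' : LinkingComp k' l' h') :
    LinkingComp (k + k') (l + l') (h + h') := by
  obtain ⟨m, rfl, rfl, rfl⟩ := hc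
  obtain ⟨m', rfl, rfl, rfl⟩ := hc'
  exact ⟨m + m', by simp, by simp, by simp⟩

theorem exists_le_of_le {c : Linking N₁ N₃} (hc : LinkingComp k l h) (hch : c ≤ h) :
    ∃ a ≤ k, ∃ b ≤ l, LinkingComp a b c ∧ LinkingComp (k - a) (l - b) (h - c) := by
  obtain ⟨m, rfl, rfl, rfl⟩ := hc
  obtain ⟨d, hd, rfl⟩ := Multiset.exists_le_map_eq_of_le_map hch
  exact ⟨_, Multiset.map_le_map hd, _, Multiset.map_le_map hd, ⟨d, rfl, rfl, rfl⟩,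
    m - d, (Multiset.map_tsub_of_le _ hd).symm, (Multiset.map_tsub_of_le _ hd).symm,
    (Multiset.map_tsub_of_le _ hd).symm⟩

theorem swap (hc : LinkingComp k l h) : LinkingComp l.swap k.swap h.swap := by
  obtain ⟨m, rfl, rfl, rfl⟩ := hc
  exact ⟨m.map fun x => (x.2.2, x.2.1, x.1), by simp [Linking.swap, Multiset.map_map]; rfl,
    by simp [Linking.swap, Multiset.map_map], by simp [Linking.swap, Multiset.map_map]⟩

end LinkingComp

def linkingCompSet (B : Set (Linking N₁ N₂)) (B' : Set (Linking N₂ N₃)) :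
    Set (Linking N₁ N₃) :=
  {h | ∃ k ∈ B, ∃ l ∈ B', LinkingComp k l h}

theorem swap_preimage_linkingCompSet (B : Set (Linking N₁ N₂)) (B' : Set (Linking N₂ N₃)) :
    Linking.swap ⁻¹' linkingCompSet B B' =
      linkingCompSet (Linking.swap ⁻¹' B') (Linking.swap ⁻¹' B) := by
  ext h
  constructor
  · rintro ⟨k, hk, l, hl, hc⟩
    exact ⟨l.swap, by simpa, k.swap, by simpa, by simpa using hc.swap⟩
  · rintro ⟨l, hl, k, hk, hc⟩
    exact ⟨k.swap, hk, l.swap, hl, hc.swap⟩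

def IsSPSim (N₁ N₂ : PetriNet Act) (B : Set (Linking N₁ N₂)) : Prop :=
  ∀ c l : Linking N₁ N₂, l ∈ B → c ≤ l → ∀ t₁ : N₁.Tr, c.proj1 = N₁.pre t₁ →
    ∃ t₂ : N₂.Tr, N₂.lbl t₂ = N₁.lbl t₁ ∧ c.proj2 = N₂.pre t₂ ∧
      ∃ cbar : Linking N₁ N₂, cbar.proj1 = N₁.post t₁ ∧ cbar.proj2 = N₂.post t₂ ∧
        l - c + cbar ∈ B

theorem isSPBisim_iff {B : Set (Linking N₁ N₂)} :
    IsSPBisim N₁ N₂ B ↔ IsSPSim N₁ N₂ B ∧ IsSPSim N₂ N₁ (Linking.swap ⁻¹' B) := by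
  refine and_congr_right' ⟨fun hB c l hl hc t₂ hpre => ?_, fun hB c l hl hc t₂ hpre => ?_⟩
  · obtain ⟨t₁, hlbl, hpre₁, cbar, hpost₁, hpost₂, hmem⟩ :=
      hB c.swap l.swap hl (Linking.swap_le_swap.2 hc) t₂ (by simpa using hpre)
    refine ⟨t₁, hlbl, by simpa using hpre₁, cbar.swap, by simpa, by simpa, ?_⟩
    simpa [Set.mem_preimage, Linking.swap_tsub hc] using hmem
  · obtain ⟨t₁, hlbl, hpre₁, cbar, hpost₂, hpost₁, hmem⟩ :=
      hB c.swap l.swap (by simpa using hl) (Linking.swap_le_swap.2 hc) t₂ (by simpa using hpre)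
    refine ⟨t₁, hlbl, by simpa using hpre₁, cbar.swap, by simpa, by simpa, ?_⟩
    have hsub : (l.swap - c.swap).swap = l - c := by
      simpa using Linking.swap_tsub (Linking.swap_le_swap.2 hc)
    simpa [Set.mem_preimage, hsub] using hmem

theorem IsSPSim.linkingCompSet {B : Set (Linking N₁ N₂)} {B' : Set (Linking N₂ N₃)}
    (hB : IsSPSim N₁ N₂ B) (hB' : IsSPSim N₂ N₃ B') :
    IsSPSim N₁ N₃ (linkingCompSet B B') := by
  rintro c h ⟨k, hk, l, hl, hc⟩ hch t₁ hpre
  obtain ⟨a, hak, b, hbl, hab, hrest⟩ := hc.exists_le_of_le hch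
  obtain ⟨t₂, hlbl₂, hpre₂, abar, habar₁, habar₂, hkB⟩ :=
    hB a k hk hak t₁ (hab.proj1_eq ▸ hpre)
  obtain ⟨t₃, hlbl₃, hpre₃, bbar, hbbar₁, hbbar₂, hlB'⟩ :=
    hB' b l hl hbl t₂ (hab.proj2_eq_proj1 ▸ hpre₂)
  obtain ⟨cbar, hcbar⟩ := LinkingComp.exists_of_proj2_eq_proj1 (habar₂.trans hbbar₁.symm)
  exact ⟨t₃, hlbl₃.trans hlbl₂, hab.proj2_eq.trans hpre₃, cbar, hcbar.proj1_eq.trans habar₁,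
    hcbar.proj2_eq.trans hbbar₂, _, hkB, _, hlB', hrest.add hcbar⟩

theorem IsSPBisim.linkingCompSet {B : Set (Linking N₁ N₂)} {B' : Set (Linking N₂ N₃)}
    (hB : IsSPBisim N₁ N₂ B) (hB' : IsSPBisim N₂ N₃ B') :
    IsSPBisim N₁ N₃ (linkingCompSet B B') := by
  rw [isSPBisim_iff] at hB hB' ⊢
  exact ⟨hB.1.linkingCompSet hB'.1,
    swap_preimage_linkingCompSet B B' ▸ hB'.2.linkingCompSet hB.2⟩

theorem SPBisimilar.trans (h₁₂ : SPBisimilar N₁ N₂) (h₂₃ : SPBisimilar N₂ N₃) :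
    SPBisimilar N₁ N₃ := by
  obtain ⟨htyp, B, hB, k, hk, hk₁, hk₂⟩ := h₁₂
  obtain ⟨htyp', B', hB', l, hl, hl₁, hl₂⟩ := h₂₃
  obtain ⟨h, hc⟩ := LinkingComp.exists_of_proj2_eq_proj1 (hk₂.trans hl₁.symm)
  exact ⟨htyp.trans htyp', _, hB.linkingCompSet hB', h, ⟨k, hk, l, hl, hc⟩,
    hc.proj1_eq.trans hk₁, hc.proj2_eq.trans hl₂⟩

end

theorem spBisim_comp_and_trans_general {Act : Type} (N₁ N₂ N₃ : PetriNet Act)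
    (B : Set (Linking N₁ N₂)) (B' : Set (Linking N₂ N₃))
    (hB : IsSPBisim N₁ N₂ B) (hB' : IsSPBisim N₂ N₃ B') :
    IsSPBisim N₁ N₃ {h : Linking N₁ N₃ | ∃ k ∈ B, ∃ l ∈ B', LinkingComp k l h} ∧
      (SPBisimilar N₁ N₂ → SPBisimilar N₂ N₃ → SPBisimilar N₁ N₃) :=
  ⟨hB.linkingCompSet hB', SPBisimilar.trans⟩

/-- The composition `B;B'` of sp-bisimulations is an sp-bisimulation; consequently
`≈sp` is transitive. -/
theorem spBisim_comp_and_trans {Act : Type} (N₁ N₂ N₃ : PetriNet Act)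
    (h₁ : N₁.BoundedParallelism) (h₂ : N₂.BoundedParallelism)
    (h₃ : N₃.BoundedParallelism)
    (B : Set (Linking N₁ N₂)) (B' : Set (Linking N₂ N₃))
    (hB : IsSPBisim N₁ N₂ B) (hB' : IsSPBisim N₂ N₃ B') :
    IsSPBisim N₁ N₃ {h : Linking N₁ N₃ | ∃ k ∈ B, ∃ l ∈ B', LinkingComp k l h} ∧
      (SPBisimilar N₁ N₂ → SPBisimilar N₂ N₃ → SPBisimilar N₁ N₃) :=
  spBisim_comp_and_trans_general N₁ N₂ N₃ B B' hB hB'
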